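/- arXiv:1705.02993 — 2 statements merged into one kernel-verified Lean document; each statement's English description precedes it below -/
import Mathlib

section
/- Let p be a prime, d ≥ 2 and M ≥ 1 integers, and let F ⊆ (SL₂(ℤ/pℤ))^d be the set of all tuples S = (g₁, …, g_d) such that no nontrivial word of length at most M evaluates at S to id or −id. Then for every integer m ≥ 1 and every g ∈ SL₂(ℤ/pℤ) with g ≠ id and g ≠ −id, one has Σ_{S ∈ F} N(S, m, g) ≤ 2·|F|·(2d)^m / (p² − 1). -/
open MeasureTheory

noncomputable section

abbrev SL (n p : ℕ) := Matrix.SpecialLinearGroup (Fin n) (ZMod p)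

/-- Density of the Kesten–McKay law with parameter `2d`. -/
noncomputable def kmDensity (d : ℕ) (x : ℝ) : ℝ :=
  if x ^ 2 ≤ 4 * (2 * (d : ℝ) - 1) then
    2 * d * Real.sqrt (4 * (2 * (d : ℝ) - 1) - x ^ 2) /
      (2 * Real.pi * ((2 * (d : ℝ)) ^ 2 - x ^ 2))
  else 0

/-- The Kesten–McKay law with parameter `2d`, as a measure on `ℝ`. -/
noncomputable def kestenMcKay (d : ℕ) : Measure ℝ :=
  MeasureTheory.volume.withDensity fun x => ENNReal.ofReal (kmDensity d x)

/-- Discrepancy between two measures on ℝ. -/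
noncomputable def discrepancy (ν μ : Measure ℝ) : ℝ :=
  sSup {r : ℝ | ∃ a b : ℝ, a ≤ b ∧
    r = |(ν (Set.Icc a b)).toReal - (μ (Set.Icc a b)).toReal|}

/-- The element of the free group on `d` generators given by a word of length `m`. -/
def wordProd {d m : ℕ} (w : Fin m → Fin d × Bool) : FreeGroup (Fin d) :=
  (List.ofFn fun j => if (w j).2 then FreeGroup.of (w j).1 else (FreeGroup.of (w j).1)⁻¹).prod

/-- Evaluation of a word of length `m` in `d` letters at a tuple `S`. -/
def wordEval {G : Type*} [Group G] {d m : ℕ} (S : Fin d → G) (w : Fin m → Fin d × Bool) : G :=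
  (List.ofFn fun j => if (w j).2 then S (w j).1 else (S (w j).1)⁻¹).prod

/-- `N(d,m)`: the number of trivial words of length `m` in `d` letters. -/
noncomputable def Ntriv (d m : ℕ) : ℕ :=
  Nat.card {w : Fin m → Fin d × Bool // wordProd w = 1}

/-- `A_{π,S} = Σᵢ (π gᵢ + (π gᵢ)⁻¹)`. -/
noncomputable def Amat {G : Type*} [Group G] {n d : ℕ}
    (π : G →* Matrix.unitaryGroup (Fin n) ℂ) (S : Fin d → G) : Matrix (Fin n) (Fin n) ℂ :=
  ∑ i, ((π (S i) : Matrix (Fin n) (Fin n) ℂ) + ((π (S i))⁻¹ : Matrix (Fin n) (Fin n) ℂ))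

/-- Spectral probability measure of a Hermitian matrix. -/
noncomputable def specMeasure {n : ℕ} (A : Matrix (Fin n) (Fin n) ℂ) : Measure ℝ := by
  classical
  exact if hA : A.IsHermitian then
    (n : ENNReal)⁻¹ • ∑ j : Fin n, Measure.dirac (hA.eigenvalues j) else 0

/-- A unitary representation is irreducible if the only invariant subspaces are `⊥` and `⊤`. -/
def IsIrreducibleRep {G : Type*} [Group G] {n : ℕ}
    (π : G →* Matrix.unitaryGroup (Fin n) ℂ) : Prop :=
  ∀ W : Submodule ℂ (Fin n → ℂ),
    (∀ g : G, ∀ v ∈ W, (π g : Matrix (Fin n) (Fin n) ℂ).mulVec v ∈ W) → W = ⊥ ∨ W = ⊤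

/-- Number of eigenvalues of a Hermitian matrix with `|λ| > t`, with multiplicity. -/
noncomputable def excCount {n : ℕ} (A : Matrix (Fin n) (Fin n) ℂ) (t : ℝ) : ℕ := by
  classical
  exact if hA : A.IsHermitian then
    (Finset.univ.filter fun j : Fin n => t < |hA.eigenvalues j|).card else 0

end

/-- N(S, m, g): the number of nontrivial words of length m whose evaluation at S equals g. -/
noncomputable def NWord {G : Type*} [Group G] {d : ℕ} (S : Fin d → G) (m : ℕ) (g : G) : ℕ :=
  Nat.card {w : Fin m → Fin d × Bool // wordProd w ≠ 1 ∧ wordEval S w = g}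

/-! Conjugating the tuple `S` by `h` permutes `F` and turns the words evaluating to `g` at `S`
into the words evaluating to `h g h⁻¹` at `h S h⁻¹`, so `∑_{S ∈ F} N(S, m, ·)` is constant on the
conjugacy class of `g`. Summing over the class and bounding the number of all words by `(2d)^m`
gives `|class g| · ∑_{S ∈ F} N(S, m, g) ≤ |F| (2d)^m`. For `g ≠ ±1` in `SL₂(𝔽_q)` the centralizer
consists of matrices `α + β g` with `α² + β tr(g) α + β² = 1`, at most two values of `α` for each
`β`, so it has at most `2q` elements and the class has at least `q(q² - 1) / 2q` elements. -/

open Finset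

section Words

variable {G H : Type*} [Group G] [Group H] {d : ℕ}

theorem map_wordEval {F : Type*} [FunLike F G H] [MonoidHomClass F G H] (φ : F)
    (S : Fin d → G) {m : ℕ} (w : Fin m → Fin d × Bool) :
    φ (wordEval S w) = wordEval (φ ∘ S) w := by
  simp only [wordEval, map_list_prod, List.map_ofFn]
  refine congrArg List.prod (congrArg List.ofFn (funext fun j => ?_))
  by_cases hb : (w j).2 <;> simp [hb]

theorem NWord_comp_of_injective {F : Type*} [FunLike F G H] [MonoidHomClass F G H] {φ : F}
    (hφ : Function.Injective φ) (S : Fin d → G) (m : ℕ) (g : G) :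
    NWord (φ ∘ S) m (φ g) = NWord S m g :=
  Nat.card_congr <| Equiv.subtypeEquivRight fun w => by rw [← map_wordEval, hφ.eq_iff]

theorem sum_NWord_le [Fintype G] (S : Fin d → G) (m : ℕ) : ∑ g, NWord S m g ≤ (2 * d) ^ m := by
  classical
  simp only [NWord, Nat.card_eq_fintype_card, Fintype.card_subtype]
  calc ∑ g, #{w | wordProd w ≠ 1 ∧ wordEval S w = g}
      = #{w : Fin m → Fin d × Bool | wordProd w ≠ 1} := by
        rw [card_eq_sum_card_fiberwise (f := wordEval S) (t := univ) fun _ _ => mem_univ _]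
        simp only [filter_filter]
    _ ≤ Fintype.card (Fin m → Fin d × Bool) := card_filter_le _ _
    _ = (2 * d) ^ m := by simp [mul_comm]

variable (F : Finset (Fin d → G))

theorem sum_NWord_conj (hF : ∀ (h : G) (S : Fin d → G), S ∈ F → MulAut.conj h ∘ S ∈ F)
    (m : ℕ) (h g : G) :
    ∑ S ∈ F, NWord S m (MulAut.conj h g) = ∑ S ∈ F, NWord S m g := by
  refine sum_nbij' (MulAut.conj h⁻¹ ∘ ·) (MulAut.conj h ∘ ·) (fun S hS => hF _ S hS)
    (fun S hS => hF _ S hS) (fun S _ => ?_) (fun S _ => ?_) (fun S _ => ?_)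
  · ext; simp [mul_assoc]
  · ext; simp [mul_assoc]
  · conv_lhs => rw [show S = MulAut.conj h ∘ (MulAut.conj h⁻¹ ∘ S) by ext; simp [mul_assoc]]
    exact NWord_comp_of_injective (MulAut.conj h).injective _ m g

theorem card_mul_sum_NWord_le [Fintype G]
    (hF : ∀ (h : G) (S : Fin d → G), S ∈ F → MulAut.conj h ∘ S ∈ F) (m : ℕ) {g : G} {C : Finset G}
    (hC : ∀ g' ∈ C, IsConj g g') :
    #C * ∑ S ∈ F, NWord S m g ≤ #F * (2 * d) ^ m :=
  calc #C * ∑ S ∈ F, NWord S m g = ∑ g' ∈ C, ∑ S ∈ F, NWord S m g' := by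
        rw [← smul_eq_mul, ← sum_const]
        refine sum_congr rfl fun g' hg' => ?_
        obtain ⟨h, rfl⟩ := isConj_iff.1 (hC g' hg')
        exact (sum_NWord_conj F hF m h g).symm
    _ ≤ ∑ g', ∑ S ∈ F, NWord S m g' := sum_le_sum_of_subset (subset_univ C)
    _ = ∑ S ∈ F, ∑ g', NWord S m g' := sum_comm
    _ ≤ ∑ _S ∈ F, (2 * d) ^ m := sum_le_sum fun S _ => sum_NWord_le S m
    _ = #F * (2 * d) ^ m := by rw [sum_const, smul_eq_mul]

end Words

theorem nat_card_conjClass_mul_nat_card_centralizer {G : Type*} [Group G] (g : G) :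
    Nat.card (ConjClasses.mk g).carrier * Nat.card (Subgroup.centralizer {g}) = Nat.card G := by
  rw [← ConjAct.orbit_eq_carrier_conjClasses, Subgroup.nat_card_centralizer_nat_card_stabilizer,
    ← Nat.card_prod]
  exact Nat.card_congr ((MulAction.orbitProdStabilizerEquivGroup (ConjAct G) g).trans
    ConjAct.ofConjAct.toEquiv)

open Polynomial in
theorem card_filter_quadratic_eq_zero_le_two {R : Type*} [CommRing R] [IsDomain R] [Fintype R]
    [DecidableEq R] (b c : R) : #{x : R | x ^ 2 + b * x + c = 0} ≤ 2 := by
  set P : R[X] := C 1 * X ^ 2 + C b * X + C c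
  have hP : P ≠ 0 := fun h0 => by simpa [P] using congrArg (coeff · 2) h0
  refine (card_le_degree_of_subset_roots (p := P) fun x hx => ?_).trans natDegree_quadratic_le
  rw [mem_roots hP]
  simpa [P] using (mem_filter.1 hx).2

namespace Matrix

theorem det_smul_one_add_smul {R : Type*} [CommRing R] (α β : R) (g : Matrix (Fin 2) (Fin 2) R) :
    (α • 1 + β • g).det = α ^ 2 + β * g.trace * α + β ^ 2 * g.det := by
  simp [det_fin_two, trace_fin_two]
  ring

variable {K : Type*} [Field K]

theorem exists_eq_smul_one_add_smul_of_commute {g h : Matrix (Fin 2) (Fin 2) K}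
    (hg : g ∉ Set.range (scalar (Fin 2))) (hgh : Commute g h) :
    ∃ α β : K, h = α • 1 + β • g := by
  have e (i j : Fin 2) : (g * h) i j = (h * g) i j := by rw [hgh.eq]
  have e00 := e 0 0
  have e01 := e 0 1
  have e10 := e 1 0
  simp only [mul_apply, Fin.sum_univ_two] at e00 e01 e10
  -- the relations say that `(h₀₁, h₁₀, h₀₀ - h₁₁)` and `(g₀₁, g₁₀, g₀₀ - g₁₁)` have zero cross product
  obtain ⟨β, h01, h10, hdiag⟩ : ∃ β, h 0 1 = β * g 0 1 ∧ h 1 0 = β * g 1 0 ∧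
      h 0 0 - h 1 1 = β * (g 0 0 - g 1 1) := by
    by_cases hb : g 0 1 = 0
    · by_cases hc : g 1 0 = 0
      · have had : g 0 0 - g 1 1 ≠ 0 := fun had => hg ⟨g 0 0, by
          ext i j; fin_cases i <;> fin_cases j <;> simp [hb, hc, sub_eq_zero.1 had]⟩
        refine ⟨(h 0 0 - h 1 1) / (g 0 0 - g 1 1), ?_, ?_, by field_simp⟩
        · rw [hb, mul_zero]
          exact (mul_eq_zero.1 (by linear_combination e01 + hb * (h 0 0 - h 1 1) :
            h 0 1 * (g 0 0 - g 1 1) = 0)).resolve_right had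
        · rw [hc, mul_zero]
          exact (mul_eq_zero.1 (by linear_combination -e10 + hc * (h 0 0 - h 1 1) :
            h 1 0 * (g 0 0 - g 1 1) = 0)).resolve_right had
      · refine ⟨h 1 0 / g 1 0, ?_, by field_simp, ?_⟩
        · field_simp; linear_combination -e00
        · field_simp; linear_combination e10
    · refine ⟨h 0 1 / g 0 1, by field_simp, ?_, ?_⟩
      · field_simp; linear_combination e00
      · field_simp; linear_combination -e01
  refine ⟨h 0 0 - β * g 0 0, β, ?_⟩
  ext i j
  fin_cases i <;> fin_cases j <;> simp [h01, h10]
  linear_combination -hdiag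

end Matrix

namespace Matrix.SpecialLinearGroup

variable {K : Type*} [Field K]

local notation "M₂" => Matrix (Fin 2) (Fin 2) K

theorem nat_card_mul_card_sub_one {ι : Type*} [Fintype ι] [DecidableEq ι] [Nonempty ι]
    [Finite K] :
    Nat.card (SpecialLinearGroup ι K) * (Nat.card K - 1) = Nat.card (GL ι K) := by
  let e : SpecialLinearGroup ι K ≃ (GeneralLinearGroup.det : GL ι K →* Kˣ).ker :=
    { toFun A := ⟨toGL A, Units.ext A.2⟩
      invFun g := ⟨g.1, congrArg Units.val g.2⟩
      left_inv _ := rfl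
      right_inv _ := Subtype.ext (Units.ext rfl) }
  rw [Nat.card_congr e, ← Nat.card_units,
    ← Subgroup.card_mul_index (GeneralLinearGroup.det : GL ι K →* Kˣ).ker, Subgroup.index_ker,
    MonoidHom.range_eq_top.2 GeneralLinearGroup.det_surjective, Subgroup.card_top]

theorem nat_card_fin_two [Fintype K] :
    Nat.card (SpecialLinearGroup (Fin 2) K) = Fintype.card K * (Fintype.card K ^ 2 - 1) := by
  have h := nat_card_mul_card_sub_one (ι := Fin 2) (K := K)
  rw [card_GL_field, Fin.prod_univ_two, Nat.card_eq_fintype_card (α := K)] at h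
  simp only [Fin.val_zero, Fin.val_one, pow_zero, pow_one, sq, ← Nat.mul_sub_one] at h
  refine Nat.eq_of_mul_eq_mul_right (Nat.sub_pos_of_lt (Fintype.one_lt_card (α := K))) ?_
  rw [h, sq]
  ring

theorem coe_notMem_range_scalar {g : SpecialLinearGroup (Fin 2) K} (hg1 : g ≠ 1)
    (hg2 : (g : M₂) ≠ -1) : (g : M₂) ∉ Set.range (scalar (Fin 2)) := by
  rintro ⟨a, ha⟩
  have ha2 : a ^ 2 = 1 := by simpa [← ha] using g.2
  rcases sq_eq_one_iff.1 ha2 with rfl | rfl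
  · exact hg1 (Subtype.ext (by simp [← ha]))
  · exact hg2 (by rw [← ha, map_neg, map_one])

theorem coe_conj_eq_neg_one {ι R : Type*} [Fintype ι] [DecidableEq ι] [CommRing R]
    (h : SpecialLinearGroup ι R) {u : SpecialLinearGroup ι R} (hu : (u : Matrix ι ι R) = -1) :
    (MulAut.conj h u : Matrix ι ι R) = -1 := by
  rw [MulAut.conj_apply, coe_mul, coe_mul, hu, mul_neg_one, neg_mul, ← coe_mul, mul_inv_cancel,
    coe_one]

theorem nat_card_centralizer_le [Fintype K] {g : SpecialLinearGroup (Fin 2) K}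
    (hg : (g : M₂) ∉ Set.range (scalar (Fin 2))) :
    Nat.card (Subgroup.centralizer {g}) ≤ 2 * Fintype.card K := by
  classical
  set s : Finset (K × K) := {x | (x.1 • 1 + x.2 • (g : M₂)).det = 1}
  have hsurj : Nat.card (Subgroup.centralizer {g}) ≤ #s := by
    rw [← Nat.card_eq_finsetCard]
    refine Nat.card_le_card_of_surjective
      (fun x => ⟨⟨x.1.1 • 1 + x.1.2 • (g : M₂), (Finset.mem_filter.1 x.2).2⟩, ?_⟩) ?_
    · refine Subgroup.mem_centralizer_singleton_iff.2 (Subtype.ext ?_)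
      exact (Commute.add_left ((Commute.one_left (g : M₂)).smul_left x.1.1)
        ((Commute.refl (g : M₂)).smul_left x.1.2)).eq
    · rintro ⟨h, hh⟩
      have hgh : Commute (g : M₂) h :=
        congrArg Subtype.val (Subgroup.mem_centralizer_singleton_iff.1 hh).symm
      obtain ⟨α, β, hαβ⟩ := exists_eq_smul_one_add_smul_of_commute hg hgh
      exact ⟨⟨(α, β), by simp [s, ← hαβ]⟩, Subtype.ext (Subtype.ext hαβ.symm)⟩
  have hfiber : ∀ β ∈ s.image Prod.snd, #{x ∈ s | x.2 = β} ≤ 2 := by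
    intro β _
    refine (card_le_card_of_injOn Prod.fst (t := {α : K | α ^ 2 + β * (g : M₂).trace * α
      + (β ^ 2 * (g : M₂).det - 1) = 0}) (fun x hx => ?_) (fun x hx y hy hxy => ?_)).trans
      (card_filter_quadratic_eq_zero_le_two _ _)
    · simp only [s, coe_filter, mem_filter, Finset.mem_univ, true_and, Set.mem_ofPred_eq] at hx ⊢
      obtain ⟨hdet, rfl⟩ := hx
      rw [det_smul_one_add_smul] at hdet
      linear_combination hdet
    · simp only [s, coe_filter, mem_filter, Finset.mem_univ, true_and, Set.mem_ofPred_eq] at hx hy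
      exact Prod.ext hxy (hx.2.trans hy.2.symm)
  calc Nat.card (Subgroup.centralizer {g}) ≤ #s := hsurj
    _ ≤ 2 * #(s.image Prod.snd) := card_le_mul_card_image s 2 hfiber
    _ ≤ 2 * Fintype.card K := Nat.mul_le_mul_left 2 (card_le_univ _)

theorem card_sq_sub_one_le_two_mul_nat_card_conjClass [Fintype K]
    {g : SpecialLinearGroup (Fin 2) K} (hg1 : g ≠ 1) (hg2 : (g : M₂) ≠ -1) :
    Fintype.card K ^ 2 - 1 ≤ 2 * Nat.card (ConjClasses.mk g).carrier := by
  have hq : 0 < Fintype.card K := Fintype.card_pos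
  refine Nat.le_of_mul_le_mul_left ?_ hq
  calc Fintype.card K * (Fintype.card K ^ 2 - 1)
      = Nat.card (ConjClasses.mk g).carrier * Nat.card (Subgroup.centralizer {g}) := by
        rw [nat_card_conjClass_mul_nat_card_centralizer, nat_card_fin_two]
    _ ≤ Nat.card (ConjClasses.mk g).carrier * (2 * Fintype.card K) :=
        Nat.mul_le_mul_left _ (nat_card_centralizer_le (coe_notMem_range_scalar hg1 hg2))
    _ = Fintype.card K * (2 * Nat.card (ConjClasses.mk g).carrier) := by ring

theorem card_sq_sub_one_mul_sum_NWord_le [Fintype K] {d : ℕ}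
    (F : Finset (Fin d → SpecialLinearGroup (Fin 2) K))
    (hF : ∀ h S, S ∈ F → MulAut.conj h ∘ S ∈ F) (m : ℕ) {g : SpecialLinearGroup (Fin 2) K}
    (hg1 : g ≠ 1) (hg2 : (g : M₂) ≠ -1) :
    (Fintype.card K ^ 2 - 1) * ∑ S ∈ F, NWord S m g ≤ 2 * #F * (2 * d) ^ m := by
  classical
  have hcount := card_mul_sum_NWord_le F hF m (C := (ConjClasses.mk g).carrier.toFinset)
    fun _ hg' => isConj_comm.1 (ConjClasses.mk_eq_mk_iff_isConj.1
      (ConjClasses.mem_carrier_iff_mk_eq.1 (Set.mem_toFinset.1 hg')))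
  rw [Set.toFinset_card, ← Nat.card_eq_fintype_card] at hcount
  calc (Fintype.card K ^ 2 - 1) * ∑ S ∈ F, NWord S m g
      ≤ 2 * (Nat.card (ConjClasses.mk g).carrier * ∑ S ∈ F, NWord S m g) := by
        rw [← mul_assoc]
        exact Nat.mul_le_mul_right _ (card_sq_sub_one_le_two_mul_nat_card_conjClass hg1 hg2)
    _ ≤ 2 * #F * (2 * d) ^ m := by
        rw [mul_assoc]
        exact Nat.mul_le_mul_left 2 hcount

end Matrix.SpecialLinearGroup

theorem stmt8_general (p : ℕ) (hp : p.Prime) (d M : ℕ)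
    (F : Finset (Fin d → SL 2 p))
    (hF : ∀ S : Fin d → SL 2 p, S ∈ F ↔
      ∀ m : ℕ, m ≤ M → ∀ w : Fin m → Fin d × Bool, wordProd w ≠ 1 →
        (wordEval S w ≠ 1 ∧ (↑(wordEval S w) : Matrix (Fin 2) (Fin 2) (ZMod p)) ≠ -1))
    (m : ℕ) (g : SL 2 p)
    (hg1 : g ≠ 1) (hg2 : (↑g : Matrix (Fin 2) (Fin 2) (ZMod p)) ≠ -1) :
    (∑ S ∈ F, (NWord S m g : ℝ)) ≤ 2 * F.card * (2 * d) ^ m / ((p : ℝ) ^ 2 - 1) := by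
  have := Fact.mk hp
  have hFconj (h : SL 2 p) (S : Fin d → SL 2 p) (hS : S ∈ F) : MulAut.conj h ∘ S ∈ F := by
    rw [hF] at hS ⊢
    intro k hk w hw
    rw [← map_wordEval]
    obtain ⟨h1, h2⟩ := hS k hk w hw
    refine ⟨by simpa using h1, fun h3 => h2 ?_⟩
    simpa only [map_inv, MulAut.inv_apply_self] using
      Matrix.SpecialLinearGroup.coe_conj_eq_neg_one h⁻¹ h3
  have hnat := Matrix.SpecialLinearGroup.card_sq_sub_one_mul_sum_NWord_le F hFconj m hg1 hg2
  rw [ZMod.card] at hnat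
  have hp1 : 1 < p ^ 2 := Nat.one_lt_pow two_ne_zero hp.one_lt
  have hcast : ((p ^ 2 - 1 : ℕ) : ℝ) = (p : ℝ) ^ 2 - 1 := by
    rw [Nat.cast_sub hp1.le]; push_cast; rfl
  rw [le_div_iff₀ (by rw [← hcast]; exact_mod_cast Nat.sub_pos_of_lt hp1), ← hcast,
    ← Nat.cast_sum, mul_comm]
  exact_mod_cast hnat

/-- Let p be prime, d ≥ 2, M ≥ 1, and F the set of tuples S ∈ SL₂(ℤ/pℤ)^d such that
no nontrivial word of length at most M evaluates at S to id or −id. Then for every m ≥ 1 and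
every g ≠ ±id, Σ_{S ∈ F} N(S, m, g) ≤ 2·|F|·(2d)^m / (p² − 1). -/
theorem stmt8 (p : ℕ) (hp : p.Prime) (d M : ℕ) (hd : 2 ≤ d) (hM : 1 ≤ M)
    (F : Finset (Fin d → SL 2 p))
    (hF : ∀ S : Fin d → SL 2 p, S ∈ F ↔
      ∀ m : ℕ, m ≤ M → ∀ w : Fin m → Fin d × Bool, wordProd w ≠ 1 →
        (wordEval S w ≠ 1 ∧ (↑(wordEval S w) : Matrix (Fin 2) (Fin 2) (ZMod p)) ≠ -1))
    (m : ℕ) (hm : 1 ≤ m) (g : SL 2 p)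
    (hg1 : g ≠ 1) (hg2 : (↑g : Matrix (Fin 2) (Fin 2) (ZMod p)) ≠ -1) :
    (∑ S ∈ F, (NWord S m g : ℝ)) ≤ 2 * F.card * (2 * d) ^ m / ((p : ℝ) ^ 2 - 1) :=
  stmt8_general p hp d M F hF m g hg1 hg2
end

section
/- Let G be a finite group, d ≥ 2 and m ≥ 1 integers, π : G → U(n) a nontrivial irreducible unitary representation of dimension n, and K > 0 a real number. Let F ⊆ G^d be a nonempty family of tuples that is invariant under simultaneous conjugation (i.e., (h g₁ h⁻¹, …, h g_d h⁻¹) ∈ F whenever (g₁, …, g_d) ∈ F and h ∈ G) and such that for every S ∈ F and every nontrivial word w of length m, the conjugacy class in G of the evaluation w(S) has at least K elements. Then (1/|F|)·Σ_{S ∈ F} ((1/n)·tr(A_{π,S}^m) − N(d, m))² ≤ (2d)^{2m}·|G| / (K·n²). -/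
open MeasureTheory

/-!
Expanding `A^m` over words gives `tr(A^m) = Σ_w χ(w(S))` with `χ = tr ∘ π`; the trivial words
contribute exactly `n · N(d, m)`. For the remaining at most `(2d)^m` words, `χ` is constant on the
conjugacy class of `w(S)`, so the orthogonality relation `Σ_{x ∈ G} |χ(x)|² = |G|` bounds
`|χ(w(S))|²` by `|G| / K`. Hence each summand on the left is already at most the right-hand side.
-/

open Finset

lemma sq_norm_sum_le_of_forall_sq_norm_le {ι E : Type*} [SeminormedAddCommGroup E]
    (s : Finset ι) (z : ι → E) {Q : ℝ} (hz : ∀ i ∈ s, ‖z i‖ ^ 2 ≤ Q) :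
    ‖∑ i ∈ s, z i‖ ^ 2 ≤ (#s : ℝ) ^ 2 * Q :=
  calc ‖∑ i ∈ s, z i‖ ^ 2 ≤ (∑ i ∈ s, ‖z i‖) ^ 2 := by gcongr; exact norm_sum_le _ _
    _ ≤ #s * ∑ i ∈ s, ‖z i‖ ^ 2 := sq_sum_le_card_mul_sum_sq
    _ ≤ #s * (#s * Q) := by gcongr; simpa using sum_le_card_nsmul s _ Q hz
    _ = (#s : ℝ) ^ 2 * Q := by ring

section Character

variable {G : Type*} [Group G] {n : ℕ} (π : G →* Matrix.unitaryGroup (Fin n) ℂ)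

def unitaryRepresentation : Representation ℂ G (Fin n → ℂ) :=
  Matrix.toLinAlgEquiv'.toMonoidHom.comp ((unitary _).subtype.comp π)

lemma unitaryRepresentation_apply (g : G) :
    unitaryRepresentation π g = Matrix.toLin' (π g : Matrix (Fin n) (Fin n) ℂ) := rfl

lemma character_unitaryRepresentation (g : G) :
    (unitaryRepresentation π).character g = (π g : Matrix (Fin n) (Fin n) ℂ).trace := by
  simp [Representation.character, unitaryRepresentation_apply]

lemma isIrreducible_unitaryRepresentation (hirr : IsIrreducibleRep π) (hn : 0 < n) :
    (unitaryRepresentation π).IsIrreducible := by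
  have : Nonempty (Fin n) := ⟨⟨0, hn⟩⟩
  refine { toNontrivial := nontrivial_of_ne ⊥ ⊤ fun h => ?_, eq_bot_or_eq_top := fun W => ?_ }
  · exact bot_ne_top (congrArg Subrepresentation.toSubmodule h)
  · exact (hirr W.toSubmodule fun g v hv => W.apply_mem_toSubmodule g hv).imp
      Subrepresentation.ext Subrepresentation.ext

lemma trace_apply_inv (g : G) :
    (π g⁻¹ : Matrix (Fin n) (Fin n) ℂ).trace = star (π g : Matrix (Fin n) (Fin n) ℂ).trace := by
  rw [map_inv, ← Matrix.trace_conjTranspose]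
  rfl

lemma trace_eq_of_isConj {g x : G} (h : IsConj g x) :
    (π x : Matrix (Fin n) (Fin n) ℂ).trace = (π g : Matrix (Fin n) (Fin n) ℂ).trace := by
  obtain ⟨c, rfl⟩ := isConj_iff.mp h
  simp only [← character_unitaryRepresentation, Representation.char_conj]

variable [Fintype G]

lemma sum_normSq_trace_eq_card (hirr : IsIrreducibleRep π) (hn : 0 < n) :
    ∑ g, Complex.normSq (π g : Matrix (Fin n) (Fin n) ℂ).trace = Fintype.card G := by
  classical
  have := isIrreducible_unitaryRepresentation π hirr hn
  have : Invertible (Nat.card G : ℂ) := invertibleOfNonzero (by simp)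
  have h := Representation.char_orthonormal (unitaryRepresentation π) (unitaryRepresentation π)
  rw [if_pos ⟨.refl _⟩] at h
  simp only [character_unitaryRepresentation, trace_apply_inv, Complex.star_def,
    Complex.mul_conj] at h
  rw [Nat.card_eq_fintype_card, inv_mul_eq_one₀ (by simp)] at h
  exact_mod_cast h.symm

lemma card_isConj_mul_normSq_trace_le (hirr : IsIrreducibleRep π) (hn : 0 < n) (g : G) :
    Nat.card {x : G // IsConj g x} * Complex.normSq (π g : Matrix (Fin n) (Fin n) ℂ).trace ≤
      Fintype.card G := by
  classical
  calc (Nat.card {x : G // IsConj g x} : ℝ) * Complex.normSq (π g : Matrix (Fin n) (Fin n) ℂ).trace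
      = ∑ x ∈ univ.filter (IsConj g), Complex.normSq (π x : Matrix (Fin n) (Fin n) ℂ).trace := by
        rw [sum_congr rfl fun x hx => by rw [trace_eq_of_isConj π (mem_filter.1 hx).2],
          sum_const, nsmul_eq_mul, Nat.card_eq_fintype_card, Fintype.card_subtype]
    _ ≤ ∑ x, Complex.normSq (π x : Matrix (Fin n) (Fin n) ℂ).trace :=
        sum_le_sum_of_subset_of_nonneg (subset_univ _) fun _ _ _ => Complex.normSq_nonneg _
    _ = Fintype.card G := sum_normSq_trace_eq_card π hirr hn

end Character

section Words

variable {G : Type*} [Group G] {d m : ℕ}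

lemma wordEval_eq_lift (S : Fin d → G) (w : Fin m → Fin d × Bool) :
    wordEval S w = FreeGroup.lift S (wordProd w) := by
  rw [wordEval, wordProd, map_list_prod, List.map_ofFn]
  congr 2
  funext j
  by_cases h : (w j).2 <;> simp [h]

lemma wordEval_eq_one (S : Fin d → G) {w : Fin m → Fin d × Bool} (h : wordProd w = 1) :
    wordEval S w = 1 := by
  rw [wordEval_eq_lift, h, map_one]

lemma wordEval_cons (S : Fin d → G) (p : Fin d × Bool) (w : Fin m → Fin d × Bool) :
    wordEval S (Fin.cons p w) = (if p.2 then S p.1 else (S p.1)⁻¹) * wordEval S w := by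
  simp only [wordEval, List.ofFn_succ, List.prod_cons, Fin.cons_zero, Fin.cons_succ]

lemma card_words : Fintype.card (Fin m → Fin d × Bool) = (2 * d) ^ m := by
  simp [mul_comm]

variable {n : ℕ} (π : G →* Matrix.unitaryGroup (Fin n) ℂ)

/- In `Amat` the `⁻¹` is `Matrix.inv` of the coerced matrix, not the inverse in the unitary group;
the two agree because `π g` is unitary. -/
lemma inv_coe_apply (g : G) :
    (π g : Matrix (Fin n) (Fin n) ℂ)⁻¹ = (π g⁻¹ : Matrix (Fin n) (Fin n) ℂ) := by
  rw [map_inv]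
  exact Matrix.inv_eq_left_inv (Unitary.coe_star_mul_self (π g))

lemma amat_eq_sum_letters (S : Fin d → G) :
    Amat π S = ∑ p : Fin d × Bool,
      (π (if p.2 then S p.1 else (S p.1)⁻¹) : Matrix (Fin n) (Fin n) ℂ) := by
  simp only [Amat, Fintype.sum_prod_type, Fintype.sum_bool, if_true, Bool.false_eq_true, if_false,
    inv_coe_apply]

lemma amat_pow_eq_sum_words (S : Fin d → G) :
    ∀ m : ℕ, Amat π S ^ m = ∑ w : Fin m → Fin d × Bool,
      (π (wordEval S w) : Matrix (Fin n) (Fin n) ℂ)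
  | 0 => by simp [wordEval]
  | m + 1 => by
    rw [pow_succ', amat_pow_eq_sum_words S m, amat_eq_sum_letters, sum_mul_sum,
      ← Fintype.sum_prod_type']
    refine Fintype.sum_equiv (Fin.consEquiv fun _ => Fin d × Bool) _ _ fun q => ?_
    rw [show (Fin.consEquiv fun _ => Fin d × Bool) q = Fin.cons q.1 q.2 from rfl, wordEval_cons,
      map_mul]
    rfl

lemma trace_amat_pow_sub_eq_sum_nontrivial (S : Fin d → G) :
    (Amat π S ^ m).trace - n * Ntriv d m =
      ∑ w ∈ univ.filter (fun w : Fin m → Fin d × Bool => wordProd w ≠ 1),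
        (π (wordEval S w) : Matrix (Fin n) (Fin n) ℂ).trace := by
  classical
  have htriv : ∑ w ∈ univ.filter (fun w : Fin m → Fin d × Bool => wordProd w = 1),
      (π (wordEval S w) : Matrix (Fin n) (Fin n) ℂ).trace = n * Ntriv d m := by
    rw [sum_congr rfl fun w hw => by rw [wordEval_eq_one S (mem_filter.1 hw).2], sum_const,
      Ntriv, Nat.card_eq_fintype_card, Fintype.card_subtype]
    simp [mul_comm]
  rw [amat_pow_eq_sum_words, Matrix.trace_sum, ← sum_filter_add_sum_filter_not _
    (fun w => wordProd w = 1), htriv, add_sub_cancel_left]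

lemma sq_trace_amat_pow_sub_le [Fintype G] (hirr : IsIrreducibleRep π) (hn : 0 < n) {K : ℝ}
    (hK : 0 < K) (S : Fin d → G)
    (hclass : ∀ w : Fin m → Fin d × Bool, wordProd w ≠ 1 →
      K ≤ (Nat.card {x : G // IsConj (wordEval S w) x} : ℝ)) :
    ((Amat π S ^ m).trace.re / n - Ntriv d m) ^ 2 ≤
      (2 * d : ℝ) ^ (2 * m) * Fintype.card G / (K * n ^ 2) := by
  classical
  set z := (Amat π S ^ m).trace - n * Ntriv d m
  have hchar : ∀ w ∈ univ.filter (fun w : Fin m → Fin d × Bool => wordProd w ≠ 1),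
      ‖(π (wordEval S w) : Matrix (Fin n) (Fin n) ℂ).trace‖ ^ 2 ≤ Fintype.card G / K := by
    intro w hw
    rw [Complex.sq_norm, le_div_iff₀ hK, mul_comm]
    exact (mul_le_mul_of_nonneg_right (hclass w (mem_filter.1 hw).2)
      (Complex.normSq_nonneg _)).trans (card_isConj_mul_normSq_trace_le π hirr hn _)
  have hcard : (#(univ.filter fun w : Fin m → Fin d × Bool => wordProd w ≠ 1) : ℝ) ≤
      (2 * d) ^ m := by
    exact_mod_cast (card_filter_le _ _).trans_eq (by rw [card_univ, card_words])
  have hz : ‖z‖ ^ 2 ≤ (2 * d : ℝ) ^ (2 * m) * (Fintype.card G / K) := by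
    rw [pow_mul', show z = _ from trace_amat_pow_sub_eq_sum_nontrivial π S]
    refine (sq_norm_sum_le_of_forall_sq_norm_le _ _ hchar).trans ?_
    gcongr
  have hre : (Amat π S ^ m).trace.re / n - Ntriv d m = z.re / n := by
    simp only [z, Complex.sub_re, Complex.mul_re, Complex.natCast_re, Complex.natCast_im, mul_zero,
      sub_zero]
    field_simp
  calc ((Amat π S ^ m).trace.re / n - Ntriv d m) ^ 2 = z.re ^ 2 / n ^ 2 := by rw [hre, div_pow]
    _ ≤ ‖z‖ ^ 2 / n ^ 2 := by
        gcongr ?_ / _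
        exact sq_le_sq.2 ((abs_norm z).symm ▸ Complex.abs_re_le_norm z)
    _ ≤ (2 * d : ℝ) ^ (2 * m) * (Fintype.card G / K) / n ^ 2 := by gcongr
    _ = _ := by ring

end Words

theorem stmt10_general {G : Type*} [Group G] [Fintype G] (d m : ℕ)
    (n : ℕ) (π : G →* Matrix.unitaryGroup (Fin n) ℂ)
    (hirr : IsIrreducibleRep π) (hnt : ∃ g, π g ≠ 1)
    (K : ℝ) (hK : 0 < K)
    (F : Finset (Fin d → G))
    (hclass : ∀ S ∈ F, ∀ w : Fin m → Fin d × Bool, wordProd w ≠ 1 →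
      K ≤ (Nat.card {x : G // IsConj (wordEval S w) x} : ℝ)) :
    (1 / (F.card : ℝ)) *
        ∑ S ∈ F, ((Amat π S ^ m).trace.re / n - (Ntriv d m : ℝ)) ^ 2 ≤
      (2 * d : ℝ) ^ (2 * m) * (Fintype.card G : ℝ) / (K * (n : ℝ) ^ 2) := by
  have hn : 0 < n := by
    refine Nat.pos_of_ne_zero fun h => ?_
    subst h
    obtain ⟨g, hg⟩ := hnt
    exact hg (Subsingleton.elim _ _)
  have hS : ∀ S ∈ F, ((Amat π S ^ m).trace.re / n - (Ntriv d m : ℝ)) ^ 2 ≤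
      (2 * d : ℝ) ^ (2 * m) * Fintype.card G / (K * n ^ 2) :=
    fun S hS => sq_trace_amat_pow_sub_le π hirr hn hK S (hclass S hS)
  rw [one_div_mul_eq_div]
  exact div_le_of_le_mul₀ (Nat.cast_nonneg _) (by positivity)
    (by simpa [mul_comm] using sum_le_card_nsmul F _ _ hS)

/-- Let G be a finite group, d ≥ 2, m ≥ 1, π a nontrivial irreducible unitary
representation of dimension n, K > 0, and F ⊆ G^d a nonempty family invariant under simultaneous
conjugation such that for every S ∈ F and every nontrivial word w of length m, the conjugacy
class of w(S) has at least K elements. Then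
(1/|F|)·Σ_{S ∈ F} ((1/n)·tr(A_{π,S}^m) − N(d,m))² ≤ (2d)^{2m}·|G| / (K·n²). -/
theorem stmt10 {G : Type*} [Group G] [Fintype G] (d m : ℕ) (hd : 2 ≤ d) (hm : 1 ≤ m)
    (n : ℕ) (π : G →* Matrix.unitaryGroup (Fin n) ℂ)
    (hirr : IsIrreducibleRep π) (hnt : ∃ g, π g ≠ 1)
    (K : ℝ) (hK : 0 < K)
    (F : Finset (Fin d → G)) (hFne : F.Nonempty)
    (hconj : ∀ S ∈ F, ∀ h : G, (fun i => h * S i * h⁻¹) ∈ F)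
    (hclass : ∀ S ∈ F, ∀ w : Fin m → Fin d × Bool, wordProd w ≠ 1 →
      K ≤ (Nat.card {x : G // IsConj (wordEval S w) x} : ℝ)) :
    (1 / (F.card : ℝ)) *
        ∑ S ∈ F, ((Amat π S ^ m).trace.re / n - (Ntriv d m : ℝ)) ^ 2 ≤
      (2 * d : ℝ) ^ (2 * m) * (Fintype.card G : ℝ) / (K * (n : ℝ) ^ 2) :=
  stmt10_general d m n π hirr hnt K hK F hclass
end
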